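/- arXiv:0801.4824 — 3 statements merged into one kernel-verified Lean document; each statement's English description precedes it below -/
import Mathlib

section
/- For every θ ≥ 1 and all x, e ∈ ℝⁿ, the vector g(x,e) with components g_i(x,e) = f_i(x₁+e₁,…,x_i+e_i) − f_i(x₁,…,x_i) satisfies ‖Δ_θ⁻¹ g(x,e)‖ ≤ L√n · ‖Δ_θ⁻¹ e‖, where Δ_θ = diag(θ, θ², …, θⁿ). -/
open Matrix Finset

/-
Write `wᵢ = θ^{-(i+1)}` for the diagonal of `Δ_θ⁻¹`; since `θ ≥ 1` the weights decrease. By the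
triangular Lipschitz bound, `wᵢ |gᵢ| ≤ L wᵢ ‖(e₁,…,eᵢ)‖ ≤ L ‖(w₁e₁,…,wᵢeᵢ)‖ ≤ L ‖Δ_θ⁻¹ e‖`, because
`wᵢ ≤ wⱼ` for `j ≤ i`. Each of the `n` components of `Δ_θ⁻¹ g` is thus bounded by `L ‖Δ_θ⁻¹ e‖`,
which costs the factor `√n` in the Euclidean norm.
-/

theorem Matrix.inv_diagonal_of_ne_zero {ι K : Type*} [Fintype ι] [DecidableEq ι] [Field K]
    {v : ι → K} (hv : ∀ i, v i ≠ 0) : (diagonal v)⁻¹ = diagonal fun i => (v i)⁻¹ := by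
  refine inv_eq_left_inv ?_
  rw [diagonal_mul_diagonal, ← diagonal_one]
  exact congrArg diagonal (funext fun i => inv_mul_cancel₀ (hv i))

theorem Real.sqrt_sum_sq_le_sqrt_card_mul {ι : Type*} [Fintype ι] {u : ι → ℝ} {C : ℝ}
    (hC : 0 ≤ C) (hu : ∀ i, |u i| ≤ C) :
    √(∑ i, u i ^ 2) ≤ √(Fintype.card ι) * C := by
  calc √(∑ i, u i ^ 2) ≤ √(∑ _i : ι, C ^ 2) :=
        Real.sqrt_le_sqrt <| sum_le_sum fun i _ =>
          sq_le_sq.mpr ((hu i).trans_eq (abs_of_nonneg hC).symm)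
    _ = √(Fintype.card ι) * C := by
        rw [sum_const, card_univ, nsmul_eq_mul, Real.sqrt_mul (Nat.cast_nonneg _), Real.sqrt_sq hC]

section AntitoneWeights

variable {ι : Type*} [Fintype ι] [LinearOrder ι] {w : ι → ℝ}

theorem Antitone.sq_mul_sum_filter_le_sq_le_sum_mul_sq (hw : Antitone w) (hw0 : ∀ i, 0 ≤ w i)
    (e : ι → ℝ) (i : ι) : w i ^ 2 * ∑ j ∈ univ.filter (· ≤ i), e j ^ 2 ≤ ∑ j, (w j * e j) ^ 2 := by
  rw [mul_sum]
  calc ∑ j ∈ univ.filter (· ≤ i), w i ^ 2 * e j ^ 2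
      ≤ ∑ j ∈ univ.filter (· ≤ i), (w j * e j) ^ 2 := by
        refine sum_le_sum fun j hj => ?_
        rw [mul_pow]
        gcongr
        · exact hw0 i
        · exact hw (mem_filter.mp hj).2
    _ ≤ ∑ j, (w j * e j) ^ 2 :=
        sum_le_sum_of_subset_of_nonneg (filter_subset _ _) fun j _ _ => sq_nonneg _

theorem Antitone.mul_sqrt_sum_filter_le_sq_le_sqrt_sum_mul_sq (hw : Antitone w)
    (hw0 : ∀ i, 0 ≤ w i) (e : ι → ℝ) (i : ι) :
    w i * √(∑ j ∈ univ.filter (· ≤ i), e j ^ 2) ≤ √(∑ j, (w j * e j) ^ 2) := by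
  rw [← Real.sqrt_sq (hw0 i), ← Real.sqrt_mul (sq_nonneg _)]
  exact Real.sqrt_le_sqrt (hw.sq_mul_sum_filter_le_sq_le_sum_mul_sq hw0 e i)

end AntitoneWeights

theorem stmt2_general (n : ℕ) (L : ℝ) (hL : 0 ≤ L)
    (f : Fin n → (Fin n → ℝ) → ℝ)
    (hfLip : ∀ i (x z : Fin n → ℝ), |f i x - f i z| ≤
      L * Real.sqrt (∑ j ∈ Finset.univ.filter (fun j => j ≤ i), (x j - z j) ^ 2))
    (θ : ℝ) (hθ : 1 ≤ θ)
    (Δ : Matrix (Fin n) (Fin n) ℝ)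
    (hΔ : Δ = Matrix.diagonal (fun i : Fin n => θ ^ ((i : ℕ) + 1))) :
    ∀ x e : Fin n → ℝ,
      Real.sqrt (∑ i, ((Δ⁻¹ *ᵥ fun i => f i (x + e) - f i x) i) ^ 2) ≤
        L * Real.sqrt n * Real.sqrt (∑ i, ((Δ⁻¹ *ᵥ e) i) ^ 2) := by
  intro x e
  have hθ0 : 0 < θ := zero_lt_one.trans_le hθ
  set w : Fin n → ℝ := fun i => (θ ^ ((i : ℕ) + 1))⁻¹
  have hw0 : ∀ i, 0 ≤ w i := fun i => by positivity
  have hw : Antitone w := fun i j hij =>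
    inv_anti₀ (by positivity) (pow_le_pow_right₀ hθ (by simpa using hij))
  rw [hΔ, inv_diagonal_of_ne_zero fun i => by positivity]
  simp only [mulVec_diagonal]
  refine (Real.sqrt_sum_sq_le_sqrt_card_mul (C := L * √(∑ j, (w j * e j) ^ 2)) (by positivity)
    fun i => ?_).trans_eq (by rw [Fintype.card_fin]; ring)
  calc |w i * (f i (x + e) - f i x)| = w i * |f i (x + e) - f i x| := by
        rw [abs_mul, abs_of_nonneg (hw0 i)]
    _ ≤ w i * (L * √(∑ j ∈ univ.filter (· ≤ i), e j ^ 2)) := by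
        gcongr
        simpa using hfLip i (x + e) x
    _ = L * (w i * √(∑ j ∈ univ.filter (· ≤ i), e j ^ 2)) := by ring
    _ ≤ L * √(∑ j, (w j * e j) ^ 2) := by
        gcongr
        exact hw.mul_sqrt_sum_filter_le_sq_le_sqrt_sum_mul_sq hw0 e i

/-- For `θ ≥ 1`, the vector `g(x,e)` with components
`gᵢ(x,e) = fᵢ(x+e) - fᵢ(x)` satisfies `‖Δ_θ⁻¹ g(x,e)‖ ≤ L √n ‖Δ_θ⁻¹ e‖`,
where `Δ_θ = diag(θ, θ², …, θⁿ)`. -/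
theorem stmt2 (n : ℕ) (hn : 1 ≤ n) (L : ℝ) (hL : 0 ≤ L)
    (f : Fin n → (Fin n → ℝ) → ℝ)
    (hf0 : ∀ i, f i (fun _ => 0) = 0)
    (hfLip : ∀ i (x z : Fin n → ℝ), |f i x - f i z| ≤
      L * Real.sqrt (∑ j ∈ Finset.univ.filter (fun j => j ≤ i), (x j - z j) ^ 2))
    (θ : ℝ) (hθ : 1 ≤ θ)
    (Δ : Matrix (Fin n) (Fin n) ℝ)
    (hΔ : Δ = Matrix.diagonal (fun i : Fin n => θ ^ ((i : ℕ) + 1))) :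
    ∀ x e : Fin n → ℝ,
      Real.sqrt (∑ i, ((Δ⁻¹ *ᵥ fun i => f i (x + e) - f i x) i) ^ 2) ≤
        L * Real.sqrt n * Real.sqrt (∑ i, ((Δ⁻¹ *ᵥ e) i) ^ 2) :=
  stmt2_general n L hL f hfLip θ hθ Δ hΔ
end

section
/- If θ ≥ max(1, 2‖P‖L√n/μ), then for all x, e ∈ ℝⁿ: 2·(Δ_θ⁻¹e)ᵀ P Δ_θ⁻¹[(A + Δ_θ k cᵀ)e + g(x,e)] ≤ −(θμ/‖P‖)·(Δ_θ⁻¹e)ᵀ P (Δ_θ⁻¹e), where g(x,e) has components g_i(x,e) = f_i(x₁+e₁,…,x_i+e_i) − f_i(x₁,…,x_i). -/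
open Matrix

/-!
In the scaled error `η = Δ_θ⁻¹ e` the linear part becomes `θ (A + k cᵀ) η`, because conjugating
the shift `A` by `Δ_θ` multiplies it by `θ`, and `cᵀ Δ_θ = θ cᵀ`; the Lyapunov inequality then
contributes `-2θμ‖η‖²`. Since `θ ≥ 1` and `f_i` only depends on the first `i` coordinates, each
component `θ^{-i} g_i` of the scaled nonlinearity is at most `L‖η‖`, so its contribution is at most
`2‖P‖L√n‖η‖² ≤ θμ‖η‖²`. Finally `ηᵀPη ≤ ‖P‖‖η‖²`.
-/

section CommRing

variable {R ι : Type*} [CommRing R] [Fintype ι]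

lemma dotProduct_mul_add_transpose_mul_mulVec {P : Matrix ι ι R} (hP : P.IsSymm)
    (M : Matrix ι ι R) (z : ι → R) :
    z ⬝ᵥ ((P * M + Mᵀ * P) *ᵥ z) = 2 * (z ⬝ᵥ (P *ᵥ (M *ᵥ z))) := by
  have hswap : (M *ᵥ z) ⬝ᵥ (P *ᵥ z) = z ⬝ᵥ (P *ᵥ (M *ᵥ z)) := by
    rw [dotProduct_mulVec, ← mulVec_transpose, hP.eq, dotProduct_comm]
  rw [add_mulVec, ← mulVec_mulVec, ← mulVec_mulVec, dotProduct_add, dotProduct_mulVec z Mᵀ,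
    vecMul_transpose, hswap]
  ring

lemma inv_mulVec_mulVec_of_mul_eq_mul [DecidableEq ι] {D B M : Matrix ι ι R}
    (hD : IsUnit D.det) (h : B * D = D * M) (e : ι → R) :
    D⁻¹ *ᵥ (B *ᵥ e) = M *ᵥ (D⁻¹ *ᵥ e) := by
  have hconj : D⁻¹ * B = M * D⁻¹ :=
    calc D⁻¹ * B = D⁻¹ * (B * D) * D⁻¹ := by
          rw [Matrix.mul_assoc, Matrix.mul_assoc, mul_nonsing_inv _ hD, Matrix.mul_one]
      _ = M * D⁻¹ := by rw [h, ← Matrix.mul_assoc, nonsing_inv_mul _ hD, Matrix.one_mul]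
  rw [mulVec_mulVec, hconj, ← mulVec_mulVec]

end CommRing

section Euclidean

variable {ι : Type*} [Fintype ι]

lemma norm_toLp_le_sqrt_card_mul {v : ι → ℝ} {C : ℝ} (hC : 0 ≤ C) (hv : ∀ i, |v i| ≤ C) :
    ‖WithLp.toLp 2 v‖ ≤ √(Fintype.card ι) * C := by
  rw [← Real.sqrt_sq hC, ← Real.sqrt_mul (Nat.cast_nonneg _), EuclideanSpace.norm_eq]
  gcongr
  calc ∑ i, ‖v i‖ ^ 2 ≤ ∑ _i : ι, C ^ 2 := by
        gcongr with i
        simpa using hv i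
    _ = Fintype.card ι * C ^ 2 := by simp

lemma dotProduct_mulVec_le_opNorm_mul [DecidableEq ι] (P : Matrix ι ι ℝ) (v w : ι → ℝ) :
    v ⬝ᵥ (P *ᵥ w) ≤ ‖toEuclideanCLM (𝕜 := ℝ) P‖ * ‖WithLp.toLp 2 v‖ * ‖WithLp.toLp 2 w‖ := by
  have hinner : v ⬝ᵥ (P *ᵥ w) =
      inner ℝ (WithLp.toLp 2 v) (toEuclideanCLM (𝕜 := ℝ) P (WithLp.toLp 2 w)) := by
    rw [toEuclideanCLM_toLp, EuclideanSpace.inner_toLp_toLp]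
    simp [dotProduct_comm]
  calc v ⬝ᵥ (P *ᵥ w) ≤ ‖WithLp.toLp 2 v‖ * ‖toEuclideanCLM (𝕜 := ℝ) P (WithLp.toLp 2 w)‖ :=
        hinner ▸ real_inner_le_norm _ _
    _ ≤ ‖WithLp.toLp 2 v‖ * (‖toEuclideanCLM (𝕜 := ℝ) P‖ * ‖WithLp.toLp 2 w‖) := by
        gcongr
        exact ContinuousLinearMap.le_opNorm _ _
    _ = _ := by ring

lemma mul_sqrt_sum_le_norm_of_antitone [LinearOrder ι] {d : ι → ℝ} (hd : Antitone d)
    (hd0 : ∀ j, 0 ≤ d j) (e : ι → ℝ) (i : ι) :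
    d i * √(∑ j ∈ Finset.univ.filter (fun j => j ≤ i), e j ^ 2) ≤
      ‖WithLp.toLp 2 (fun j => d j * e j)‖ := by
  rw [EuclideanSpace.norm_eq, ← Real.sqrt_sq (hd0 i), ← Real.sqrt_mul (sq_nonneg _),
    Finset.mul_sum]
  gcongr
  calc ∑ j ∈ Finset.univ.filter (fun j => j ≤ i), d i ^ 2 * e j ^ 2
      ≤ ∑ j ∈ Finset.univ.filter (fun j => j ≤ i), ‖d j * e j‖ ^ 2 := by
        gcongr with j hj
        rw [Real.norm_eq_abs, sq_abs, mul_pow]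
        gcongr
        · exact hd0 i
        · exact hd (Finset.mem_filter.mp hj).2
    _ ≤ ∑ j, ‖d j * e j‖ ^ 2 :=
        Finset.sum_le_sum_of_subset_of_nonneg (Finset.filter_subset _ _)
          fun _ _ _ => by positivity

end Euclidean

section Scaling

variable {R : Type*} [CommRing R] {n : ℕ}

local notation "Δ[" θ "]" => diagonal fun i : Fin _ => θ ^ ((i : ℕ) + 1)

lemma shift_mul_diagonal_pow {A : Matrix (Fin n) (Fin n) R}
    (hA : ∀ i j : Fin n, A i j = if (j : ℕ) = (i : ℕ) + 1 then 1 else 0) (θ : R) :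
    A * Δ[θ] = θ • (Δ[θ] * A) := by
  ext i j
  simp only [mul_diagonal, diagonal_mul, Matrix.smul_apply, smul_eq_mul, hA]
  split_ifs with h
  · rw [h]; ring
  · simp

lemma vecMul_diagonal_pow_of_eq_single {c : Fin n → R}
    (hc : ∀ i, c i = if (i : ℕ) = 0 then 1 else 0) (θ : R) :
    c ᵥ* Δ[θ] = θ • c := by
  ext j
  simp only [vecMul_diagonal, Pi.smul_apply, smul_eq_mul, hc]
  split_ifs with h <;> simp [h]

lemma observer_mul_diagonal_pow {A : Matrix (Fin n) (Fin n) R}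
    (hA : ∀ i j : Fin n, A i j = if (j : ℕ) = (i : ℕ) + 1 then 1 else 0) {c : Fin n → R}
    (hc : ∀ i, c i = if (i : ℕ) = 0 then 1 else 0) (k : Fin n → R) (θ : R) :
    (A + Δ[θ] * vecMulVec k c) * Δ[θ] = Δ[θ] * (θ • (A + vecMulVec k c)) := by
  rw [add_mul, shift_mul_diagonal_pow hA, Matrix.mul_assoc, vecMulVec_mul,
    vecMul_diagonal_pow_of_eq_single hc, vecMulVec_smul, Matrix.mul_smul, Matrix.mul_smul,
    ← smul_add, ← Matrix.mul_add]

lemma inv_diagonal_pow {K : Type*} [Field K] {θ : K} (hθ : θ ≠ 0) :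
    (Δ[θ] : Matrix (Fin n) (Fin n) K)⁻¹ = Δ[θ⁻¹] := by
  apply inv_eq_left_inv
  rw [diagonal_mul_diagonal, ← diagonal_one]
  congr 1
  ext i
  rw [inv_pow, inv_mul_cancel₀ (pow_ne_zero _ hθ)]

lemma isUnit_det_diagonal_pow {K : Type*} [Field K] {θ : K} (hθ : θ ≠ 0) :
    IsUnit (Δ[θ] : Matrix (Fin n) (Fin n) K).det := by
  rw [det_diagonal, isUnit_iff_ne_zero]
  exact Finset.prod_ne_zero_iff.mpr fun i _ => pow_ne_zero _ hθ

lemma norm_inv_diagonal_pow_mulVec_le {L θ : ℝ} (hL : 0 ≤ L) (hθ : 1 ≤ θ) {g e : Fin n → ℝ}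
    (hg : ∀ i, |g i| ≤ L * √(∑ j ∈ Finset.univ.filter (fun j => j ≤ i), e j ^ 2)) :
    ‖WithLp.toLp 2 (Δ[θ]⁻¹ *ᵥ g)‖ ≤ √n * (L * ‖WithLp.toLp 2 (Δ[θ]⁻¹ *ᵥ e)‖) := by
  have hθ0 : θ ≠ 0 := (zero_lt_one.trans_le hθ).ne'
  have hd0 : ∀ i : Fin n, 0 ≤ θ⁻¹ ^ ((i : ℕ) + 1) := fun i => by positivity
  have hd : Antitone fun i : Fin n => θ⁻¹ ^ ((i : ℕ) + 1) := fun i j hij =>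
    pow_le_pow_of_le_one (by positivity) (inv_le_one_of_one_le₀ hθ) (by simpa using hij)
  rw [inv_diagonal_pow hθ0, funext (mulVec_diagonal _ e)]
  have hcomp (i : Fin n) :
      |(Δ[θ⁻¹] *ᵥ g) i| ≤ L * ‖WithLp.toLp 2 fun j : Fin n => θ⁻¹ ^ ((j : ℕ) + 1) * e j‖ :=
    calc |(Δ[θ⁻¹] *ᵥ g) i| = θ⁻¹ ^ ((i : ℕ) + 1) * |g i| := by
          rw [mulVec_diagonal, abs_mul, abs_of_nonneg (hd0 i)]
      _ ≤ θ⁻¹ ^ ((i : ℕ) + 1) * (L * √(∑ j ∈ Finset.univ.filter (fun j => j ≤ i), e j ^ 2)) :=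
          mul_le_mul_of_nonneg_left (hg i) (hd0 i)
      _ = L * (θ⁻¹ ^ ((i : ℕ) + 1) * √(∑ j ∈ Finset.univ.filter (fun j => j ≤ i), e j ^ 2)) := by
          ring
      _ ≤ L * ‖WithLp.toLp 2 fun j : Fin n => θ⁻¹ ^ ((j : ℕ) + 1) * e j‖ :=
          mul_le_mul_of_nonneg_left (mul_sqrt_sum_le_norm_of_antitone hd hd0 e i) hL
  simpa using norm_toLp_le_sqrt_card_mul (by positivity) hcomp

end Scaling

theorem stmt4_general (n : ℕ) (L : ℝ) (hL : 0 ≤ L)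
    (f : Fin n → (Fin n → ℝ) → ℝ)
    (hfLip : ∀ i (x z : Fin n → ℝ), |f i x - f i z| ≤
      L * Real.sqrt (∑ j ∈ Finset.univ.filter (fun j => j ≤ i), (x j - z j) ^ 2))
    (A : Matrix (Fin n) (Fin n) ℝ)
    (hA : ∀ i j : Fin n, A i j = if (j : ℕ) = (i : ℕ) + 1 then 1 else 0)
    (c : Fin n → ℝ) (hc : ∀ i, c i = if (i : ℕ) = 0 then 1 else 0)
    (k : Fin n → ℝ) (θ : ℝ)
    (Δ : Matrix (Fin n) (Fin n) ℝ)
    (hΔ : Δ = Matrix.diagonal (fun i : Fin n => θ ^ ((i : ℕ) + 1)))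
    (P : Matrix (Fin n) (Fin n) ℝ) (hP : P.PosDef)
    (μ : ℝ) (hμ : 0 < μ)
    (hLyap : ∀ z : Fin n → ℝ,
      z ⬝ᵥ ((P * (A + Matrix.vecMulVec k c) + (A + Matrix.vecMulVec k c)ᵀ * P) *ᵥ z)
        ≤ -2 * μ * ∑ i, z i ^ 2)
    (hθ : max 1 (2 * ‖Matrix.toEuclideanCLM (𝕜 := ℝ) P‖ * L * Real.sqrt n / μ) ≤ θ) :
    ∀ x e : Fin n → ℝ,
      2 * ((Δ⁻¹ *ᵥ e) ⬝ᵥ (P *ᵥ (Δ⁻¹ *ᵥ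
          ((A + Δ * Matrix.vecMulVec k c) *ᵥ e + fun i => f i (x + e) - f i x))))
        ≤ -(θ * μ / ‖Matrix.toEuclideanCLM (𝕜 := ℝ) P‖) *
            ((Δ⁻¹ *ᵥ e) ⬝ᵥ (P *ᵥ (Δ⁻¹ *ᵥ e))) := by
  intro x e
  subst hΔ
  set Δ : Matrix (Fin n) (Fin n) ℝ := diagonal fun i => θ ^ ((i : ℕ) + 1)
  set Pn := ‖toEuclideanCLM (𝕜 := ℝ) P‖
  set M := A + vecMulVec k c
  set g : Fin n → ℝ := fun i => f i (x + e) - f i x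
  set η := Δ⁻¹ *ᵥ e
  set N := ‖WithLp.toLp 2 η‖
  have hθ1 : 1 ≤ θ := (le_max_left _ _).trans hθ
  have hθ0 : 0 < θ := zero_lt_one.trans_le hθ1
  have hgain : 2 * Pn * L * √n ≤ θ * μ := (div_le_iff₀ hμ).mp ((le_max_right _ _).trans hθ)
  have hsplit : Δ⁻¹ *ᵥ ((A + Δ * vecMulVec k c) *ᵥ e + g) = θ • (M *ᵥ η) + Δ⁻¹ *ᵥ g := by
    rw [mulVec_add, inv_mulVec_mulVec_of_mul_eq_mul (isUnit_det_diagonal_pow hθ0.ne')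
      (observer_mul_diagonal_pow hA hc k θ), smul_mulVec]
  have hdecay : η ⬝ᵥ (P *ᵥ (M *ᵥ η)) ≤ -μ * N ^ 2 := by
    have h := hLyap η
    have hN : N ^ 2 = ∑ i, η i ^ 2 := EuclideanSpace.real_norm_sq_eq _
    rw [dotProduct_mul_add_transpose_mul_mulVec (isHermitian_iff_isSymm.mp hP.isHermitian),
      ← hN] at h
    linarith
  have hpert : η ⬝ᵥ (P *ᵥ (Δ⁻¹ *ᵥ g)) ≤ Pn * N * (√n * (L * N)) := by
    refine (dotProduct_mulVec_le_opNorm_mul P η _).trans ?_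
    gcongr
    exact norm_inv_diagonal_pow_mulVec_le hL hθ1 fun i => by simpa using hfLip i (x + e) x
  have hquad : θ * μ / Pn * (η ⬝ᵥ (P *ᵥ η)) ≤ θ * μ * N ^ 2 := by
    have hPn : 0 ≤ Pn := norm_nonneg _
    rcases hPn.eq_or_lt with hzero | hpos
    -- if `‖P‖ = 0` the factor `θμ/‖P‖` is `0` by the convention `x / 0 = 0`
    · rw [← hzero, div_zero, zero_mul]
      positivity
    · calc θ * μ / Pn * (η ⬝ᵥ (P *ᵥ η)) ≤ θ * μ / Pn * (Pn * N * N) := by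
            gcongr
            exact dotProduct_mulVec_le_opNorm_mul P η η
        _ = θ * μ * N ^ 2 := by field_simp
  rw [hsplit, mulVec_add, mulVec_smul, dotProduct_add, dotProduct_smul, smul_eq_mul]
  nlinarith [mul_le_mul_of_nonneg_left hdecay hθ0.le,
    mul_le_mul_of_nonneg_right hgain (sq_nonneg N)]

/-- The Lyapunov dissipation inequality for the scaled high-gain observer error,
without measurement error: if `θ ≥ max(1, 2‖P‖L√n/μ)` then
`2 (Δ_θ⁻¹e)ᵀ P Δ_θ⁻¹[(A + Δ_θ k cᵀ)e + g(x,e)] ≤ -(θμ/‖P‖) (Δ_θ⁻¹e)ᵀ P (Δ_θ⁻¹e)`. -/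
theorem stmt4 (n : ℕ) (hn : 1 ≤ n) (L : ℝ) (hL : 0 ≤ L)
    (f : Fin n → (Fin n → ℝ) → ℝ)
    (hf0 : ∀ i, f i (fun _ => 0) = 0)
    (hfLip : ∀ i (x z : Fin n → ℝ), |f i x - f i z| ≤
      L * Real.sqrt (∑ j ∈ Finset.univ.filter (fun j => j ≤ i), (x j - z j) ^ 2))
    (A : Matrix (Fin n) (Fin n) ℝ)
    (hA : ∀ i j : Fin n, A i j = if (j : ℕ) = (i : ℕ) + 1 then 1 else 0)
    (c : Fin n → ℝ) (hc : ∀ i, c i = if (i : ℕ) = 0 then 1 else 0)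
    (k : Fin n → ℝ) (θ : ℝ) (hθpos : 0 < θ)
    (Δ : Matrix (Fin n) (Fin n) ℝ)
    (hΔ : Δ = Matrix.diagonal (fun i : Fin n => θ ^ ((i : ℕ) + 1)))
    (P : Matrix (Fin n) (Fin n) ℝ) (hP : P.PosDef)
    (μ : ℝ) (hμ : 0 < μ)
    (hLyap : ∀ z : Fin n → ℝ,
      z ⬝ᵥ ((P * (A + Matrix.vecMulVec k c) + (A + Matrix.vecMulVec k c)ᵀ * P) *ᵥ z)
        ≤ -2 * μ * ∑ i, z i ^ 2)
    (hθ : max 1 (2 * ‖Matrix.toEuclideanCLM (𝕜 := ℝ) P‖ * L * Real.sqrt n / μ) ≤ θ) :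
    ∀ x e : Fin n → ℝ,
      2 * ((Δ⁻¹ *ᵥ e) ⬝ᵥ (P *ᵥ (Δ⁻¹ *ᵥ
          ((A + Δ * Matrix.vecMulVec k c) *ᵥ e + fun i => f i (x + e) - f i x))))
        ≤ -(θ * μ / ‖Matrix.toEuclideanCLM (𝕜 := ℝ) P‖) *
            ((Δ⁻¹ *ᵥ e) ⬝ᵥ (P *ᵥ (Δ⁻¹ *ᵥ e))) :=
  stmt4_general n L hL f hfLip A hA c hc k θ Δ hΔ P hP μ hμ hLyap hθ
end

section
/- Let v : [0,∞) → ℝ be continuous and bounded, and let x, z : [0,∞) → ℝⁿ be differentiable functions satisfying x′(t) = A x(t) and z′(t) = A z(t) + k·(cᵀz(t) − cᵀx(t) + v(t)) for all t ≥ 0. Then for all t ≥ 0: ‖z(t) − x(t)‖ ≤ exp(−μt)·√(K₂/K₁)·‖z(0) − x(0)‖ + √(γ/(2μK₁))·sup_{0≤τ≤t}|v(τ)|. -/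
/-!
Along the error `e = z - x` one has `e' = (A + k cᵀ) e + v k`, so the derivative of
`V = eᵀ P e` is exactly the left-hand side of the dissipation inequality (i). Hence
`V' ≤ -2μ V + γ M²` on `[0, t]`, where `M = sup |v|` there, and Grönwall's inequality gives
`V t ≤ exp (-2μ t) V 0 + γ M² / (2μ)`. The bounds (ii) turn this into the estimate for `‖e‖`,
using `√(a² + b²) ≤ a + b`.
-/

open Matrix Real Set

theorem le_exp_mul_add_div_of_hasDerivAt_le {V V' : ℝ → ℝ} {a b t : ℝ} (ha : 0 < a)
    (hb : 0 ≤ b) (ht : 0 ≤ t) (hV : ∀ s ∈ Icc 0 t, HasDerivAt V (V' s) s)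
    (hV' : ∀ s ∈ Ico 0 t, V' s ≤ -a * V s + b) :
    V t ≤ exp (-a * t) * V 0 + b / a := by
  have hgronwall := le_gronwallBound_of_liminf_deriv_right_le
    (fun s hs => (hV s hs).continuousAt.continuousWithinAt)
    (fun s hs r hr => (hV s (Ico_subset_Icc_self hs)).hasDerivWithinAt.liminf_right_slope_le hr)
    le_rfl hV' t ⟨ht, le_rfl⟩
  rw [sub_zero, gronwallBound_of_K_ne_0 (neg_ne_zero.2 ha.ne')] at hgronwall
  calc V t ≤ _ := hgronwall
    _ = exp (-a * t) * V 0 + b / a * (1 - exp (-a * t)) := by field_simp; ring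
    _ ≤ exp (-a * t) * V 0 + b / a :=
      add_le_add_right
        (mul_le_of_le_one_right (div_nonneg hb ha.le) (sub_le_self _ (exp_pos _).le)) _

variable {ι : Type*} [Fintype ι]

theorem Matrix.IsSymm.dotProduct_mulVec_comm {P : Matrix ι ι ℝ} (hP : P.IsSymm) (u w : ι → ℝ) :
    u ⬝ᵥ (P *ᵥ w) = w ⬝ᵥ (P *ᵥ u) := by
  rw [dotProduct_mulVec, ← hP.eq, vecMul_transpose, hP.eq, dotProduct_comm]

theorem HasDerivAt.dotProduct_mulVec_self {e : ℝ → ι → ℝ} {e' : ι → ℝ} {s : ℝ}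
    (P : Matrix ι ι ℝ) (he : HasDerivAt e e' s) :
    HasDerivAt (fun τ => e τ ⬝ᵥ (P *ᵥ e τ)) (e' ⬝ᵥ (P *ᵥ e s) + e s ⬝ᵥ (P *ᵥ e')) s := by
  have hi := hasDerivAt_pi.1 he
  have hPe : HasDerivAt (fun τ => P *ᵥ e τ) (P *ᵥ e') s :=
    hasDerivAt_pi.2 fun i => by
      simp only [mulVec, dotProduct]
      exact HasDerivAt.fun_sum fun j _ => (hi j).const_mul (P i j)
  simp only [dotProduct, ← Finset.sum_add_distrib]
  exact HasDerivAt.fun_sum fun i _ => (hi i).mul (hasDerivAt_pi.1 hPe i)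

theorem Matrix.IsSymm.hasDerivAt_dotProduct_mulVec_self {P : Matrix ι ι ℝ} (hP : P.IsSymm)
    {e : ℝ → ι → ℝ} {e' : ι → ℝ} {s : ℝ} (he : HasDerivAt e e' s) :
    HasDerivAt (fun τ => e τ ⬝ᵥ (P *ᵥ e τ)) (2 * (e s ⬝ᵥ (P *ᵥ e'))) s := by
  convert he.dotProduct_mulVec_self P using 1
  rw [hP.dotProduct_mulVec_comm e', two_mul]

theorem Matrix.IsSymm.two_mul_dotProduct_mulVec_add_smul {P : Matrix ι ι ℝ} (hP : P.IsSymm)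
    (B : Matrix ι ι ℝ) (k x : ι → ℝ) (w : ℝ) :
    2 * (x ⬝ᵥ (P *ᵥ (B *ᵥ x + w • k))) =
      x ⬝ᵥ ((P * B) *ᵥ x) + x ⬝ᵥ ((Bᵀ * P) *ᵥ x) + 2 * (x ⬝ᵥ (P *ᵥ k)) * w := by
  have : x ⬝ᵥ ((Bᵀ * P) *ᵥ x) = x ⬝ᵥ ((P * B) *ᵥ x) := by
    rw [← mulVec_mulVec, ← mulVec_mulVec, dotProduct_mulVec x Bᵀ, vecMul_transpose,
      hP.dotProduct_mulVec_comm]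
  rw [this, mulVec_add, mulVec_smul, dotProduct_add, dotProduct_smul, mulVec_mulVec, smul_eq_mul]
  ring

theorem hasDerivAt_sub_of_hasDerivAt_observer {A : Matrix ι ι ℝ} {k c : ι → ℝ} {x z : ℝ → ι → ℝ}
    {w s : ℝ} (hx : HasDerivAt x (A *ᵥ x s) s)
    (hz : HasDerivAt z (A *ᵥ z s + (c ⬝ᵥ z s - c ⬝ᵥ x s + w) • k) s) :
    HasDerivAt (fun τ => z τ - x τ) ((A + vecMulVec k c) *ᵥ (z s - x s) + w • k) s := by
  refine (hz.sub hx).congr_deriv ?_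
  rw [add_mulVec, vecMulVec_mulVec, mulVec_sub, dotProduct_sub, op_smul_eq_smul]
  module

theorem sqrt_le_exp_mul_sqrt_add_sqrt_mul {K₁ K₂ μ γ t S S₀ V V₀ M : ℝ} (hK₁ : 0 < K₁)
    (hK₂ : 0 < K₂) (hμ : 0 < μ) (hγ : 0 < γ) (hS₀ : 0 ≤ S₀) (hM : 0 ≤ M)
    (hS : K₁ * S ≤ V) (hV : V ≤ exp (-(2 * μ) * t) * V₀ + γ * M ^ 2 / (2 * μ))
    (hV₀ : V₀ ≤ K₂ * S₀) :
    √S ≤ exp (-μ * t) * √(K₂ / K₁) * √S₀ + √(γ / (2 * μ * K₁)) * M := by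
  refine sqrt_le_iff.2 ⟨by positivity, ?_⟩
  have hexp : exp (-μ * t) ^ 2 = exp (-(2 * μ) * t) := by rw [sq, ← exp_add]; ring_nf
  have hV₀' : exp (-(2 * μ) * t) * V₀ ≤ exp (-(2 * μ) * t) * (K₂ * S₀) :=
    mul_le_mul_of_nonneg_left hV₀ (exp_pos _).le
  have hS' : S ≤ exp (-(2 * μ) * t) * (K₂ / K₁) * S₀ + γ / (2 * μ * K₁) * M ^ 2 := by
    rw [← mul_le_mul_iff_of_pos_left hK₁]
    convert hS.trans (hV.trans (add_le_add_left hV₀' _)) using 1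
    field_simp
  have hcross : 0 ≤ exp (-μ * t) * √(K₂ / K₁) * √S₀ * (√(γ / (2 * μ * K₁)) * M) := by
    positivity
  calc S ≤ _ := hS'
    _ ≤ _ := by
      rw [add_sq, mul_pow, mul_pow, mul_pow, hexp, sq_sqrt (by positivity), sq_sqrt hS₀,
        sq_sqrt (by positivity)]
      linarith

theorem stmt9_general (n : ℕ)
    (A : Matrix (Fin n) (Fin n) ℝ) (k c : Fin n → ℝ)
    (P : Matrix (Fin n) (Fin n) ℝ) (hP : P.PosDef)
    (μ γ K₁ K₂ : ℝ) (hμ : 0 < μ) (hγ : 0 < γ) (hK₁ : 0 < K₁) (hK₂ : 0 < K₂)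
    (hLyap : ∀ (x : Fin n → ℝ) (v : ℝ),
      x ⬝ᵥ ((P * (A + Matrix.vecMulVec k c)) *ᵥ x)
          + x ⬝ᵥ (((A + Matrix.vecMulVec k c)ᵀ * P) *ᵥ x)
          + 2 * (x ⬝ᵥ (P *ᵥ k)) * v
        ≤ -2 * μ * (x ⬝ᵥ (P *ᵥ x)) + γ * v ^ 2)
    (hPbounds : ∀ x : Fin n → ℝ,
      K₁ * ∑ i, x i ^ 2 ≤ x ⬝ᵥ (P *ᵥ x) ∧ x ⬝ᵥ (P *ᵥ x) ≤ K₂ * ∑ i, x i ^ 2)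
    (v : ℝ → ℝ)
    (hvbdd : ∃ M, ∀ t, 0 ≤ t → |v t| ≤ M)
    (x z : ℝ → Fin n → ℝ)
    (hx : ∀ t, 0 ≤ t → ∀ i, HasDerivAt (fun s => x s i) ((A *ᵥ x t) i) t)
    (hz : ∀ t, 0 ≤ t → ∀ i, HasDerivAt (fun s => z s i)
      ((A *ᵥ z t) i + k i * (c ⬝ᵥ z t - c ⬝ᵥ x t + v t)) t) :
    ∀ t, 0 ≤ t →
      Real.sqrt (∑ i, (z t i - x t i) ^ 2) ≤
        Real.exp (-μ * t) * Real.sqrt (K₂ / K₁) * Real.sqrt (∑ i, (z 0 i - x 0 i) ^ 2)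
          + Real.sqrt (γ / (2 * μ * K₁)) * sSup ((fun τ => |v τ|) '' Set.Icc 0 t) := by
  obtain ⟨M₀, hM₀⟩ := hvbdd
  intro t ht
  set M := sSup ((fun τ => |v τ|) '' Icc 0 t)
  have hvM : ∀ s ∈ Icc 0 t, |v s| ≤ M := fun s hs =>
    le_csSup ⟨M₀, by rintro _ ⟨τ, hτ, rfl⟩; exact hM₀ τ hτ.1⟩ ⟨s, hs, rfl⟩
  have hPsymm : P.IsSymm := isHermitian_iff_isSymm.1 hP.isHermitian
  have he : ∀ s, 0 ≤ s →
      HasDerivAt (fun τ => z τ - x τ) ((A + vecMulVec k c) *ᵥ (z s - x s) + v s • k) s :=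
    fun s hs => hasDerivAt_sub_of_hasDerivAt_observer (hasDerivAt_pi.2 (hx s hs))
      (hasDerivAt_pi.2 fun i => (hz s hs i).congr_deriv (by simp [mul_comm]))
  have hV := le_exp_mul_add_div_of_hasDerivAt_le (mul_pos two_pos hμ)
    (by positivity : 0 ≤ γ * M ^ 2) ht
    (fun s hs => hPsymm.hasDerivAt_dotProduct_mulVec_self (he s hs.1)) fun s hs => by
      rw [hPsymm.two_mul_dotProduct_mulVec_add_smul]
      have hv2 : v s ^ 2 ≤ M ^ 2 :=
        sq_le_sq.2 ((hvM s (Ico_subset_Icc_self hs)).trans (le_abs_self M))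
      nlinarith [hLyap (z s - x s) (v s)]
  exact sqrt_le_exp_mul_sqrt_add_sqrt_mul hK₁ hK₂ hμ hγ (by positivity)
    ((abs_nonneg _).trans (hvM 0 ⟨le_rfl, ht⟩)) (hPbounds _).1 hV (hPbounds _).2

/-- ISS estimate for the Luenberger observer of a linear detectable system:
`‖z(t) - x(t)‖ ≤ exp(-μt) √(K₂/K₁) ‖z(0) - x(0)‖ + √(γ/(2μK₁)) sup_{0≤τ≤t} |v(τ)|`. -/
theorem stmt9 (n : ℕ) (hn : 1 ≤ n)
    (A : Matrix (Fin n) (Fin n) ℝ) (k c : Fin n → ℝ)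
    (P : Matrix (Fin n) (Fin n) ℝ) (hP : P.PosDef)
    (μ γ K₁ K₂ : ℝ) (hμ : 0 < μ) (hγ : 0 < γ) (hK₁ : 0 < K₁) (hK₂ : 0 < K₂)
    (hLyap : ∀ (x : Fin n → ℝ) (v : ℝ),
      x ⬝ᵥ ((P * (A + Matrix.vecMulVec k c)) *ᵥ x)
          + x ⬝ᵥ (((A + Matrix.vecMulVec k c)ᵀ * P) *ᵥ x)
          + 2 * (x ⬝ᵥ (P *ᵥ k)) * v
        ≤ -2 * μ * (x ⬝ᵥ (P *ᵥ x)) + γ * v ^ 2)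
    (hPbounds : ∀ x : Fin n → ℝ,
      K₁ * ∑ i, x i ^ 2 ≤ x ⬝ᵥ (P *ᵥ x) ∧ x ⬝ᵥ (P *ᵥ x) ≤ K₂ * ∑ i, x i ^ 2)
    (v : ℝ → ℝ) (hv : ContinuousOn v (Set.Ici 0))
    (hvbdd : ∃ M, ∀ t, 0 ≤ t → |v t| ≤ M)
    (x z : ℝ → Fin n → ℝ)
    (hx : ∀ t, 0 ≤ t → ∀ i, HasDerivAt (fun s => x s i) ((A *ᵥ x t) i) t)
    (hz : ∀ t, 0 ≤ t → ∀ i, HasDerivAt (fun s => z s i)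
      ((A *ᵥ z t) i + k i * (c ⬝ᵥ z t - c ⬝ᵥ x t + v t)) t) :
    ∀ t, 0 ≤ t →
      Real.sqrt (∑ i, (z t i - x t i) ^ 2) ≤
        Real.exp (-μ * t) * Real.sqrt (K₂ / K₁) * Real.sqrt (∑ i, (z 0 i - x 0 i) ^ 2)
          + Real.sqrt (γ / (2 * μ * K₁)) * sSup ((fun τ => |v τ|) '' Set.Icc 0 t) :=
  stmt9_general n A k c P hP μ γ K₁ K₂ hμ hγ hK₁ hK₂ hLyap hPbounds v hvbdd x z hx hz
end
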